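/- arXiv:2309.11598 — 3 statements merged into one kernel-verified Lean document; each statement's English description precedes it below -/
import Mathlib

section
/- Let M be a structure in a first-order language and let φ(x̄) := ⋀ᵢ αᵢ(x̄ᵢ) ∧ ⋀ⱼ ¬βⱼ(x̄ⱼ) be a formula with parameters from M, where each x̄ᵢ and x̄ⱼ is a subtuple of x̄. Suppose that (1) φ(x̄) is mutually algebraic over M, (2) the set {ā : M ⊨ φ(ā)} is infinite, and (3) each αᵢ(x̄ᵢ) and each βⱼ(x̄ⱼ), regarded as a formula in its own free variables x̄ᵢ respectively x̄ⱼ, is mutually algebraic over M. Then the conjunction α(x̄) := ⋀ᵢ αᵢ(x̄ᵢ), regarded as a formula in the free variables x̄, is mutually algebraic over M. -/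
open FirstOrder FirstOrder.Language

/-- The conjunction of a finite set of formulas, as `BoundedFormula.iInf` was defined in the
older Mathlib (indexed by a `Finset`). -/
noncomputable def FirstOrder.Language.BoundedFormula.iInfFinset {L : Language} {α : Type*} {β : Type*} {n : ℕ}
    (s : Finset β) (f : β → L.BoundedFormula α n) : L.BoundedFormula α n :=
  (s.toList.map f).foldr (· ⊓ ·) ⊤

/-- A formula `φ` with free variables `Fin n` and parameters from `M` (the `Sum.inr`
variables, which are always assigned to themselves via `id`) is *mutually algebraic over `M`*
if there is `k : ℕ` such that for every partition of the free variables `Fin n` into two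
nonempty sets `s` and `sᶜ` and every assignment `a` to the variables in `s`, there are at
most `k` assignments to the variables in `sᶜ` making `φ` true (equivalently, at most `k`
valuations `v` agreeing with `a` on `s` and satisfying `φ`). -/
def IsMutuallyAlgebraic (L : Language) (M : Type*) [L.Structure M] {n : ℕ}
    (φ : L.Formula (Fin n ⊕ M)) : Prop :=
  ∃ k : ℕ, ∀ s : Set (Fin n), s.Nonempty → sᶜ.Nonempty → ∀ a : Fin n → M,
    {v : Fin n → M | (∀ i ∈ s, v i = a i) ∧ φ.Realize (Sum.elim v id)}.Finite ∧
    {v : Fin n → M | (∀ i ∈ s, v i = a i) ∧ φ.Realize (Sum.elim v id)}.ncard ≤ k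

/-!
Say that `αᵢ` straddles a set `F` of coordinates if its variables meet both `F` and `Fᶜ`. Every
nonempty proper `F` is straddled by some `αᵢ`: otherwise splicing realizations of `φ` on `F` with a
fixed realization `v₀` off `F` preserves all the `αᵢ`. A splice satisfying no `βⱼ` realizes `φ` and
agrees with `v₀` off `F`. A splice satisfying some `βⱼ` forces `βⱼ` to straddle `F`, so, agreeing
with `v₀` off `F`, it takes finitely many values on the variables of `βⱼ`, each of them shared by
finitely many splices. So there are finitely many splices, each coming from finitely many
realizations of `φ`, against infiniteness. Given this connectivity, once the values on a nonempty
`F` are fixed, mutual algebraicity of a straddling `αᵢ` bounds the extensions to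
`F ∪ range (e i)`, and induction on `Fᶜ` bounds the realizations of `⋀ᵢ αᵢ`.
-/

namespace Set

variable {α β ι M : Type*}

theorem encard_le_mul_of_mapsTo {S : Set α} {T : Set β} {g : α → β} (hg : MapsTo g S T)
    (hT : T.Finite) {b : ℕ∞} (hfib : ∀ y ∈ T, {x ∈ S | g x = y}.encard ≤ b) :
    S.encard ≤ T.encard * b := by
  classical
  have hcover : S ⊆ ⋃ y ∈ hT.toFinset, {x ∈ S | g x = y} := fun x hx =>
    mem_biUnion (hT.mem_toFinset.2 (hg hx)) ⟨hx, rfl⟩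
  calc S.encard ≤ ∑ y ∈ hT.toFinset, {x ∈ S | g x = y}.encard :=
        (encard_le_encard hcover).trans (hT.toFinset.set_encard_biUnion_le _)
    _ ≤ ∑ _y ∈ hT.toFinset, b := Finset.sum_le_sum fun y hy => hfib y (hT.mem_toFinset.1 hy)
    _ = T.encard * b := by rw [Finset.sum_const, nsmul_eq_mul, hT.encard_eq_coe_toFinset_card]

theorem piecewise_comp_eq_or {κ : Type*} {F : Set ι} [∀ x, Decidable (x ∈ F)] {g : κ → ι}
    (hg : ¬((g ⁻¹' F).Nonempty ∧ (g ⁻¹' F)ᶜ.Nonempty)) (v w : ι → M) :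
    F.piecewise v w ∘ g = v ∘ g ∨ F.piecewise v w ∘ g = w ∘ g := by
  by_cases hF : (g ⁻¹' F).Nonempty
  · have hall : ∀ y, g y ∈ F := fun y => by_contra fun hy => hg ⟨hF, ⟨y, hy⟩⟩
    exact Or.inl (funext fun y => piecewise_eq_of_mem _ _ _ (hall y))
  · exact Or.inr (funext fun y => piecewise_eq_of_notMem _ _ _ fun hy => hF ⟨y, hy⟩)

theorem encard_le_of_eqOn {S U : Set (ι → M)} {s : Set ι} {b : ℕ∞}
    (hS : ∀ a, {v ∈ S | EqOn v a s}.encard ≤ b) (hUS : U ⊆ S)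
    (hU : ∀ u ∈ U, ∀ u' ∈ U, EqOn u u' s) : U.encard ≤ b := by
  rcases U.eq_empty_or_nonempty with rfl | ⟨u₀, hu₀⟩
  · simp
  · refine (encard_le_encard fun u hu => ?_).trans (hS u₀)
    exact ⟨hUS hu, hU u hu u₀ hu₀⟩

def IsMutuallyAlgebraicWith (S : Set (ι → M)) (k : ℕ) : Prop :=
  ∀ s : Set ι, s.Nonempty → sᶜ.Nonempty → ∀ a : ι → M, {v ∈ S | EqOn v a s}.encard ≤ k

def IsMutuallyAlgebraic (S : Set (ι → M)) : Prop :=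
  ∃ k, S.IsMutuallyAlgebraicWith k

namespace IsMutuallyAlgebraicWith

variable {S : Set (ι → M)} {k : ℕ}

theorem mono (h : S.IsMutuallyAlgebraicWith k) {l : ℕ} (hkl : k ≤ l) :
    S.IsMutuallyAlgebraicWith l :=
  fun s hs hs' a => (h s hs hs' a).trans (by exact_mod_cast hkl)

theorem finite (h : S.IsMutuallyAlgebraicWith k) {s : Set ι} (hs : s.Nonempty)
    (hs' : sᶜ.Nonempty) (a : ι → M) : {v ∈ S | EqOn v a s}.Finite :=
  finite_of_encard_le_coe (h s hs hs' a)

theorem finite_of_eqOn (h : S.IsMutuallyAlgebraicWith k) {s : Set ι} (hs : s.Nonempty)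
    (hs' : sᶜ.Nonempty) {U : Set (ι → M)} (hUS : U ⊆ S)
    (hU : ∀ u ∈ U, ∀ u' ∈ U, EqOn u u' s) : U.Finite :=
  finite_of_encard_le_coe (encard_le_of_eqOn (h s hs hs') hUS hU)

end IsMutuallyAlgebraicWith

variable {P Q : Type*} {κ : P → Type*} {τ : Q → Type*} {e : ∀ i, κ i → ι} {f : ∀ j, τ j → ι}
  {A : ∀ i, Set (κ i → M)} {B : ∀ j, Set (τ j → M)}

theorem exists_straddling_of_infinite [Finite Q] {k : ℕ} {b : Q → ℕ}
    (hΦ : {v : ι → M | (∀ i, v ∘ e i ∈ A i) ∧ ∀ j, v ∘ f j ∉ B j}.IsMutuallyAlgebraicWith k)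
    (hinf : {v : ι → M | (∀ i, v ∘ e i ∈ A i) ∧ ∀ j, v ∘ f j ∉ B j}.Infinite)
    (hB : ∀ j, (B j).IsMutuallyAlgebraicWith (b j)) {F : Set ι} (hF : F.Nonempty)
    (hFc : Fᶜ.Nonempty) : ∃ i, (e i ⁻¹' F).Nonempty ∧ (e i ⁻¹' F)ᶜ.Nonempty := by
  classical
  set Φ := {v : ι → M | (∀ i, v ∘ e i ∈ A i) ∧ ∀ j, v ∘ f j ∉ B j}
  obtain ⟨v₀, hv₀⟩ := hinf.nonempty
  by_contra hsep
  rw [not_exists] at hsep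
  set ρ : (ι → M) → ι → M := fun v => F.piecewise v v₀
  have hρA : ∀ v ∈ Φ, ∀ i, ρ v ∘ e i ∈ A i := fun v hv i => by
    rcases piecewise_comp_eq_or (hsep i) v v₀ with h | h <;> rw [h]
    exacts [hv.1 i, hv₀.1 i]
  suffices hfin : (ρ '' Φ).Finite by
    refine hinf ((hfin.biUnion fun y _ => hΦ.finite hF hFc y).subset fun v hv => ?_)
    exact mem_biUnion (mem_image_of_mem ρ hv)
      ⟨hv, fun x hx => (piecewise_eq_of_mem _ _ _ hx).symm⟩
  have hsplit : ρ '' Φ ⊆ {u ∈ Φ | EqOn u v₀ Fᶜ} ∪ ⋃ j, {u ∈ ρ '' Φ | u ∘ f j ∈ B j} := by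
    rintro _ ⟨v, hv, rfl⟩
    by_cases h : ∃ j, ρ v ∘ f j ∈ B j
    · obtain ⟨j, hj⟩ := h
      exact Or.inr (mem_iUnion.2 ⟨j, mem_image_of_mem ρ hv, hj⟩)
    · exact Or.inl ⟨⟨hρA v hv, not_exists.1 h⟩, fun x hx => piecewise_eq_of_notMem _ _ _ hx⟩
  refine ((hΦ.finite hFc (hF.mono (compl_compl F).ge) v₀).union
    (finite_iUnion fun j => ?_)).subset hsplit
  by_cases hj : (f j ⁻¹' F).Nonempty ∧ (f j ⁻¹' F)ᶜ.Nonempty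
  · have hW := (hB j).finite hj.2 (hj.1.mono (compl_compl _).ge) (v₀ ∘ f j)
    obtain ⟨y₀, hy₀⟩ := hj.1
    have hfib : ∀ w, {v ∈ Φ | ρ v ∘ f j = w}.Finite := fun w => by
      refine hΦ.finite_of_eqOn (s := F ∩ range (f j)) ⟨f j y₀, hy₀, y₀, rfl⟩
        (hFc.mono (compl_subset_compl.2 inter_subset_left)) (sep_subset _ _) ?_
      rintro v hv v' hv' _ ⟨hx, y, rfl⟩
      calc v (f j y) = ρ v (f j y) := (piecewise_eq_of_mem _ _ _ hx).symm
        _ = ρ v' (f j y) := congrFun (hv.2.trans hv'.2.symm) y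
        _ = v' (f j y) := piecewise_eq_of_mem _ _ _ hx
    refine (hW.biUnion fun w _ => (hfib w).image ρ).subset ?_
    rintro _ ⟨⟨v, hv, rfl⟩, hvB⟩
    exact mem_biUnion ⟨hvB, fun y hy => piecewise_eq_of_notMem _ _ _ hy⟩
      (mem_image_of_mem ρ ⟨hv, rfl⟩)
  · refine finite_empty.subset ?_
    rintro _ ⟨⟨v, hv, rfl⟩, hvB⟩
    rcases piecewise_comp_eq_or hj v v₀ with h | h <;> rw [h] at hvB
    exacts [hv.2 j hvB, hv₀.2 j hvB]

theorem encard_setOf_eqOn_le_pow [Finite ι] {K : ℕ} (hK : 1 ≤ K)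
    (hA : ∀ i, (A i).IsMutuallyAlgebraicWith K)
    (hconn : ∀ F : Set ι, F.Nonempty → Fᶜ.Nonempty →
      ∃ i, (e i ⁻¹' F).Nonempty ∧ (e i ⁻¹' F)ᶜ.Nonempty)
    {F : Set ι} (hF : F.Nonempty) (c : ι → M) :
    {v : ι → M | (∀ i, v ∘ e i ∈ A i) ∧ EqOn v c F}.encard ≤ (K : ℕ∞) ^ Fᶜ.ncard := by
  induction hm : Fᶜ.ncard using Nat.strong_induction_on generalizing F c with
  | _ m ih =>
  rcases Fᶜ.eq_empty_or_nonempty with hFc | hFc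
  · have hFuniv : F = univ := compl_empty_iff.1 hFc
    calc _ ≤ ({c} : Set (ι → M)).encard :=
          encard_le_encard fun v hv => funext fun x => hv.2 (hFuniv ▸ mem_univ x)
      _ = 1 := encard_singleton c
      _ ≤ _ := one_le_pow₀ (by exact_mod_cast hK)
  obtain ⟨i, ⟨y₁, hy₁⟩, ⟨y₂, hy₂⟩⟩ := hconn F hF hFc
  set F' := F ∪ range (e i)
  have hlt : F'ᶜ.ncard < m := hm ▸ ncard_lt_ncard
    ((ssubset_iff_of_subset (compl_subset_compl.2 subset_union_left)).2
      ⟨e i y₂, hy₂, fun h => h (Or.inr ⟨y₂, rfl⟩)⟩)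
  have hT := hA i _ ⟨y₁, hy₁⟩ ⟨y₂, hy₂⟩ (c ∘ e i)
  calc _ ≤ (K : ℕ∞) * K ^ F'ᶜ.ncard := by
        refine (encard_le_mul_of_mapsTo (g := (· ∘ e i)) ?_ (finite_of_encard_le_coe hT) ?_).trans
          (mul_le_mul_left hT _)
        · exact fun v hv => ⟨hv.1 i, fun y hy => hv.2 hy⟩
        · rintro w -
          refine encard_le_of_eqOn (fun a => ih _ hlt (hF.mono subset_union_left) a rfl)
            (fun v hv => hv.1.1) ?_
          rintro v hv v' hv' _ (hx | ⟨y, rfl⟩)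
          · exact (hv.1.2 hx).trans (hv'.1.2 hx).symm
          · exact congrFun (hv.2.trans hv'.2.symm) y
    _ = (K : ℕ∞) ^ (F'ᶜ.ncard + 1) := (pow_succ' _ _).symm
    _ ≤ _ := pow_le_pow_right₀ (by exact_mod_cast hK) hlt

theorem IsMutuallyAlgebraic.setOf_forall_comp_mem [Finite ι] [Finite P] [Finite Q]
    (hΦ : {v : ι → M | (∀ i, v ∘ e i ∈ A i) ∧ ∀ j, v ∘ f j ∉ B j}.IsMutuallyAlgebraic)
    (hinf : {v : ι → M | (∀ i, v ∘ e i ∈ A i) ∧ ∀ j, v ∘ f j ∉ B j}.Infinite)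
    (hA : ∀ i, (A i).IsMutuallyAlgebraic) (hB : ∀ j, (B j).IsMutuallyAlgebraic) :
    {v : ι → M | ∀ i, v ∘ e i ∈ A i}.IsMutuallyAlgebraic := by
  obtain ⟨k, hk⟩ := hΦ
  choose a ha using hA
  choose b hb using hB
  obtain ⟨K, hK⟩ := (finite_range a).bddAbove
  refine ⟨(K + 1) ^ Nat.card ι, fun s hs hs' c => ?_⟩
  calc _ ≤ ((K + 1 : ℕ) : ℕ∞) ^ sᶜ.ncard :=
        encard_setOf_eqOn_le_pow le_add_self
          (fun i => (ha i).mono ((hK ⟨i, rfl⟩).trans K.le_succ))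
          (fun F hF hFc => exists_straddling_of_infinite hk hinf hb hF hFc) hs c
    _ ≤ _ := by
        push_cast
        exact pow_le_pow_right₀ le_add_self (by exact_mod_cast ncard_le_card _)

end Set

namespace FirstOrder.Language

variable {L : Language} {M : Type*} [L.Structure M]

theorem Formula.realize_iInfFinset {α β : Type*} (s : Finset β) (φ : β → L.Formula α)
    (v : α → M) :
    Formula.Realize (BoundedFormula.iInfFinset s φ) v ↔ ∀ b ∈ s, (φ b).Realize v := by
  simp [Formula.Realize, BoundedFormula.iInfFinset, BoundedFormula.realize_foldr_inf]

theorem Formula.realize_relabel_sumMap {α β γ δ : Type*} (φ : L.Formula (α ⊕ γ)) (g : α → β)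
    (h : γ → δ) (v : β → M) (w : δ → M) :
    (φ.relabel (Sum.map g h)).Realize (Sum.elim v w) ↔ φ.Realize (Sum.elim (v ∘ g) (w ∘ h)) := by
  rw [Formula.realize_relabel, Sum.elim_comp_map]

end FirstOrder.Language

theorem isMutuallyAlgebraic_iff {L : Language} {M : Type*} [L.Structure M] {n : ℕ}
    (φ : L.Formula (Fin n ⊕ M)) :
    IsMutuallyAlgebraic L M φ ↔
      {v : Fin n → M | φ.Realize (Sum.elim v id)}.IsMutuallyAlgebraic := by
  simp only [IsMutuallyAlgebraic, Set.IsMutuallyAlgebraic, Set.IsMutuallyAlgebraicWith,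
    Set.encard_le_coe_iff_finite_ncard_le, Set.sep_ofPred, Set.EqOn, and_comm]

theorem mutuallyAlgebraic_conjunction_of_infinite_general (L : Language) (M : Type*) [L.Structure M]
    {n p q : ℕ} (m : Fin p → ℕ) (m' : Fin q → ℕ)
    (α : ∀ i : Fin p, L.Formula (Fin (m i) ⊕ M))
    (β : ∀ j : Fin q, L.Formula (Fin (m' j) ⊕ M))
    (e : ∀ i : Fin p, Fin (m i) → Fin n) (f : ∀ j : Fin q, Fin (m' j) → Fin n)
    (φ : L.Formula (Fin n ⊕ M))
    (hφdef : φ =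
      (BoundedFormula.iInfFinset Finset.univ fun i : Fin p => (α i).relabel (Sum.map (e i) id)) ⊓
      (BoundedFormula.iInfFinset Finset.univ fun j : Fin q =>
        ((β j).relabel (Sum.map (f j) id)).not))
    (hφma : IsMutuallyAlgebraic L M φ)
    (hinf : {v : Fin n → M | φ.Realize (Sum.elim v id)}.Infinite)
    (hα : ∀ i, IsMutuallyAlgebraic L M (α i))
    (hβ : ∀ j, IsMutuallyAlgebraic L M (β j)) :
    IsMutuallyAlgebraic L M
      (BoundedFormula.iInfFinset Finset.univ fun i : Fin p => (α i).relabel (Sum.map (e i) id)) := by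
  subst hφdef
  simp only [isMutuallyAlgebraic_iff, Formula.realize_inf, Formula.realize_not,
    Formula.realize_iInfFinset, Formula.realize_relabel_sumMap, Finset.mem_univ,
    true_implies] at *
  exact hφma.setOf_forall_comp_mem hinf hα hβ

/-- Laskowski–Terry: suppose `φ(x̄) = ⋀ᵢ αᵢ(x̄ᵢ) ∧ ⋀ⱼ ¬βⱼ(x̄ⱼ)`, where each `x̄ᵢ`, `x̄ⱼ`
is a subtuple of `x̄` (given by injections `e i : Fin (m i) → Fin n` and
`f j : Fin (m' j) → Fin n`).  If (1) `φ` is mutually algebraic over `M`, (2) the set of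
realizations of `φ` in `M` is infinite, and (3) each `αᵢ` and `βⱼ` (as a formula in its own
free variables) is mutually algebraic over `M`, then `⋀ᵢ αᵢ(x̄ᵢ)`, regarded as a formula in
the free variables `x̄`, is mutually algebraic over `M`. -/
theorem mutuallyAlgebraic_conjunction_of_infinite (L : Language) (M : Type*) [L.Structure M]
    {n p q : ℕ} (m : Fin p → ℕ) (m' : Fin q → ℕ)
    (α : ∀ i : Fin p, L.Formula (Fin (m i) ⊕ M))
    (β : ∀ j : Fin q, L.Formula (Fin (m' j) ⊕ M))
    (e : ∀ i : Fin p, Fin (m i) → Fin n) (f : ∀ j : Fin q, Fin (m' j) → Fin n)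
    (he : ∀ i, Function.Injective (e i)) (hf : ∀ j, Function.Injective (f j))
    (φ : L.Formula (Fin n ⊕ M))
    (hφdef : φ =
      (BoundedFormula.iInfFinset Finset.univ fun i : Fin p => (α i).relabel (Sum.map (e i) id)) ⊓
      (BoundedFormula.iInfFinset Finset.univ fun j : Fin q =>
        ((β j).relabel (Sum.map (f j) id)).not))
    (hφma : IsMutuallyAlgebraic L M φ)
    (hinf : {v : Fin n → M | φ.Realize (Sum.elim v id)}.Infinite)
    (hα : ∀ i, IsMutuallyAlgebraic L M (α i))
    (hβ : ∀ j, IsMutuallyAlgebraic L M (β j)) :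
    IsMutuallyAlgebraic L M
      (BoundedFormula.iInfFinset Finset.univ fun i : Fin p => (α i).relabel (Sum.map (e i) id)) :=
  mutuallyAlgebraic_conjunction_of_infinite_general L M m m' α β e f φ hφdef hφma hinf hα hβ
end

section
/- There exists a computable infinite binary tree R ⊆ List Bool such that no path through R is guessable. -/
/-- `R ⊆ List Bool` is a binary tree if it is closed under initial segments. -/
def IsBinaryTree (R : Set (List Bool)) : Prop :=
  ∀ σ ∈ R, ∀ τ : List Bool, τ <+: σ → τ ∈ R

/-- The length-`n` initial segment of an infinite binary sequence `x : ℕ → Bool`. -/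
def initSeg (x : ℕ → Bool) (n : ℕ) : List Bool :=
  List.ofFn fun i : Fin n => x i

/-- `x : ℕ → Bool` is a path through `R` if every finite initial segment of `x` is in `R`. -/
def IsPath (R : Set (List Bool)) (x : ℕ → Bool) : Prop :=
  ∀ n : ℕ, initSeg x n ∈ R

/-- A sequence `x : ℕ → Bool` is *guessable* if there are a constant `C` and a computable
function `g : ℕ → ℕ → Option (List Bool)` such that for every `n`: every string output by
`g n` has length `n`, the set of strings output by `g n` has at most `C * (n + 1)^2`
elements, and some output of `g n` is the length-`n` initial segment of `x`. -/
def Guessable (x : ℕ → Bool) : Prop :=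
  ∃ (C : ℕ) (g : ℕ → ℕ → Option (List Bool)), Computable₂ g ∧
    ∀ n : ℕ,
      (∀ s σ, g n s = some σ → σ.length = n) ∧
      {σ : List Bool | ∃ s, g n s = some σ}.Finite ∧
      {σ : List Bool | ∃ s, g n s = some σ}.ncard ≤ C * (n + 1) ^ 2 ∧
      ∃ s, g n s = some (initSeg x n)

/-!
Requirement `e = ⟨c, C⟩` stands for the candidate guesser computed by the code `c` with
constant `C`. It watches a single length `L = level e`, chosen so that
`C (L + 1)² · 2^(e+1) ≤ 2^L`: whenever the guesses for level `L` that `c` produces within `k`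
steps number at most `C (L + 1)²`, every string of length `≥ k` extending one of them is
removed from the tree. A guessable path is guessed by some requirement within its bound,
so it is removed. Since guesses only accumulate, the removals of requirement `e` up to length
`m` come from one set of at most `C (L + 1)²` guesses, i.e. they hit at most a `2^-(e+1)`
fraction of the strings of length `m`; so some string of each length survives. Membership only
runs codes for boundedly many steps, hence the tree is primitive recursive.
-/

open Nat.Partrec (Code)
open Nat.Partrec.Code Encodable

theorem Computable₂.exists_code_eval_pair {α : Type*} [Primcodable α] {g : ℕ → ℕ → α}
    (hg : Computable₂ g) :
    ∃ c : Code, ∀ n s, eval c (Nat.pair n s) = Part.some (encode (g n s)) := by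
  obtain ⟨c, hc⟩ := exists_code.1 hg
  exact ⟨c, fun n s => by simp [hc]⟩

theorem Primrec.list_mem {α : Type*} [Primcodable α] :
    PrimrecRel fun (a : α) (l : List α) => a ∈ l :=
  (PrimrecRel.exists_mem_list Primrec.eq).swap.of_eq fun a l => by simp

theorem Primrec.list_dedup {α : Type*} [Primcodable α] [DecidableEq α] :
    Primrec (List.dedup : List α → List α) := by
  refine (list_foldr .id (const []) (ite (list_mem.comp (fst.comp snd) (snd.comp snd))
    (snd.comp snd) (list_cons.comp (fst.comp snd) (snd.comp snd))).to₂).of_eq fun l => ?_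
  change l.foldr (fun a r => if a ∈ r then r else a :: r) [] = l.dedup
  induction l with
  | nil => rfl
  | cons a l ih =>
    rw [List.foldr_cons, ih]
    split_ifs with h
    · exact (List.dedup_cons_of_mem' h).symm
    · exact (List.dedup_cons_of_notMem' h).symm

theorem List.Vector.card_filter_take_mem_le {α : Type*} [Fintype α] [DecidableEq α]
    (S : Finset (List α)) (m L : ℕ) :
    (Finset.univ.filter fun v : List.Vector α m => v.toList.take L ∈ S).card ≤
      S.card * Fintype.card α ^ (m - L) := by
  rw [← card_vector, ← Finset.card_univ, ← Finset.card_product]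
  refine Finset.card_le_card_of_injOn (fun v => (v.toList.take L, v.drop L)) ?_ ?_
  · intro v hv
    simpa using hv
  · intro v _ w _ hvw
    simp only [Prod.mk.injEq] at hvw
    rw [← List.Vector.toList_injective.eq_iff, ← List.take_append_drop L v.toList,
      ← List.take_append_drop L w.toList, hvw.1, ← toList_drop, ← toList_drop, hvw.2]

theorem Nat.sum_range_two_pow_sub_succ_lt (m : ℕ) :
    ∑ e ∈ Finset.range m, 2 ^ (m - (e + 1)) < 2 ^ m := by
  rw [Finset.sum_congr rfl fun e _ => by rw [show m - (e + 1) = m - 1 - e by omega],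
    Finset.sum_range_reflect (2 ^ ·) m, Nat.geomSum_eq le_rfl]
  have := Nat.one_le_two_pow (n := m)
  omega

theorem initSeg_take (x : ℕ → Bool) {n k : ℕ} (h : n ≤ k) :
    (initSeg x k).take n = initSeg x n := by
  apply List.ext_getElem <;> simp [initSeg, h]

namespace Nat.Partrec.Code

variable (α : Type*) [Primcodable α]

/-- The values `a` with `g n s = some a`, `s < k`, found by running for `k` steps a code `c`
that maps `Nat.pair n s` to `encode (g n s)`. -/
def guesses (c : Code) (n k : ℕ) : List α :=
  (List.range k).filterMap fun s => (evaln k c (Nat.pair n s)).bind fun y => (decode y).join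

variable {α}

theorem guesses_mono {c : Code} {n k k' : ℕ} (h : k ≤ k') :
    guesses α c n k ⊆ guesses α c n k' := by
  intro a ha
  simp only [guesses, List.mem_filterMap, List.mem_range, Option.bind_eq_some_iff] at ha ⊢
  obtain ⟨s, hs, y, hy, hya⟩ := ha
  exact ⟨s, hs.trans_le h, y, evaln_mono h hy, hya⟩

section

variable {g : ℕ → ℕ → Option α} {c : Code} {n : ℕ}

theorem exists_eq_some_of_mem_guesses
    (hc : ∀ s, eval c (Nat.pair n s) = Part.some (encode (g n s))) {k : ℕ} {a : α}
    (ha : a ∈ guesses α c n k) : ∃ s, g n s = some a := by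
  simp only [guesses, List.mem_filterMap, List.mem_range, Option.bind_eq_some_iff] at ha
  obtain ⟨s, -, y, hy, hya⟩ := ha
  have hys : y = encode (g n s) := Part.mem_some_iff.1 (hc s ▸ evaln_sound hy)
  rw [hys, encodek] at hya
  exact ⟨s, hya⟩

theorem eventually_mem_guesses
    (hc : ∀ s, eval c (Nat.pair n s) = Part.some (encode (g n s))) {s : ℕ} {a : α}
    (hs : g n s = some a) :
    ∀ᶠ k in Filter.atTop, a ∈ guesses α c n k := by
  obtain ⟨k, hk⟩ := evaln_complete.1 (hc s ▸ Part.mem_some (encode (g n s)))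
  filter_upwards [Filter.eventually_ge_atTop (max k (s + 1))] with k' hk'
  simp only [guesses, List.mem_filterMap, List.mem_range, Option.bind_eq_some_iff]
  exact ⟨s, by omega, _, evaln_mono (le_of_max_le_left hk') hk, by simp [hs]⟩

end

open _root_.Primrec in
theorem primrec_guesses : Primrec fun p : Code × ℕ × ℕ => guesses α p.1 p.2.1 p.2.2 := by
  have hrun : Primrec₂ fun (p : Code × ℕ × ℕ) (s : ℕ) => evaln p.2.2 p.1 (Nat.pair p.2.1 s) :=
    primrec_evaln.comp ((((snd.comp snd).comp fst).pair (fst.comp fst)).pair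
      (Primrec₂.natPair.comp ((fst.comp snd).comp fst) snd))
  have hdecode : Primrec fun y : ℕ => (decode (α := Option α) y).join :=
    option_bind Primrec.decode snd.to₂
  exact listFilterMap (list_range.comp (snd.comp snd))
    (option_bind hrun (hdecode.comp snd).to₂)

end Nat.Partrec.Code

namespace NoGuessableTree

def bound (e n : ℕ) : ℕ := e.unpair.2 * (n + 1) ^ 2

/-- Any `L` with `bound e L * 2 ^ (e + 1) ≤ 2 ^ L` would do; an explicit one keeps the tree
primitive recursive. -/
def level (e : ℕ) : ℕ := 3 * (e.unpair.2 + e + 5)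

theorem bound_level_mul_two_pow_le (e : ℕ) :
    bound e (level e) * 2 ^ (e + 1) ≤ 2 ^ level e := by
  set C := e.unpair.2
  set M := C + e + 5
  have hC : C ≤ 2 ^ C := Nat.lt_two_pow_self.le
  have hM : M + 1 ≤ 2 ^ M := Nat.lt_two_pow_self
  calc bound e (level e) * 2 ^ (e + 1) = C * (3 * M + 1) ^ 2 * 2 ^ (e + 1) := rfl
    _ ≤ 2 ^ C * (4 * 2 ^ M) ^ 2 * 2 ^ (e + 1) := by gcongr; omega
    _ = 2 ^ (C + 2 * M + e + 5) := by ring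
    _ = 2 ^ level e := by rw [level]; congr 1; omega

def guessesAt (e k : ℕ) : List (List Bool) :=
  guesses (List Bool) (Denumerable.ofNat Code e.unpair.1) (level e) k

def Kills (e k : ℕ) (σ : List Bool) : Prop :=
  level e ≤ k ∧ σ.take (level e) ∈ guessesAt e k ∧
    (guessesAt e k).toFinset.card ≤ bound e (level e)

def tree : Set (List Bool) := {σ | ∀ k ≤ σ.length, ∀ e < k, ¬ Kills e k σ}

theorem isBinaryTree_tree : IsBinaryTree tree := by
  intro σ hσ τ hτ k hk e he ⟨hlevel, hmem, hcard⟩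
  have htake : τ.take (level e) = σ.take (level e) := by
    rw [List.prefix_iff_eq_take.1 hτ, List.take_take, min_eq_left (hlevel.trans hk)]
  exact hσ k (hk.trans hτ.length_le) e he ⟨hlevel, htake ▸ hmem, hcard⟩

section Computability

open Primrec

theorem primrec_level : Primrec level :=
  nat_mul.comp (const 3) (nat_add.comp (nat_add.comp (snd.comp unpair) .id) (const 5))

theorem primrec_bound : Primrec₂ bound :=
  nat_mul.comp (snd.comp (unpair.comp fst))
    ((Primrec₂.unpaired'.1 Nat.Primrec.pow).comp (succ.comp snd) (const 2))

theorem primrec_guessesAt : Primrec₂ guessesAt :=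
  primrec_guesses.comp (((Primrec.ofNat Code).comp (fst.comp (unpair.comp fst))).pair
    ((primrec_level.comp fst).pair snd))

theorem primrecRel_kills : PrimrecRel fun e (p : ℕ × List Bool) => Kills e p.1 p.2 := by
  have hlevel : Primrec fun p : ℕ × ℕ × List Bool => level p.1 := primrec_level.comp fst
  have hguesses : Primrec fun p : ℕ × ℕ × List Bool => guessesAt p.1 p.2.1 :=
    primrec_guessesAt.comp fst (fst.comp snd)
  refine (nat_le.comp hlevel (fst.comp snd)).and
    ((list_mem.comp (list_take.comp hlevel (snd.comp snd)) hguesses).and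
      (nat_le.comp (list_length.comp (list_dedup.comp hguesses))
        (primrec_bound.comp fst hlevel))) |>.of_eq fun p => ?_
  simp only [Kills, List.card_toFinset]

theorem primrecPred_mem_tree : PrimrecPred (· ∈ tree) := by
  have hstage : PrimrecRel fun k (σ : List Bool) => ∀ e < k, ¬ Kills e k σ :=
    (PrimrecRel.forall_mem_list primrecRel_kills.not).comp (list_range.comp fst) .id |>.of_eq
      fun p => by simp only [List.mem_range, id]
  exact (PrimrecRel.forall_mem_list hstage).comp (list_range.comp (succ.comp list_length)) .id
    |>.of_eq fun σ => by simp only [List.mem_range, Nat.lt_succ_iff, id]; rfl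

end Computability

section Counting

open Finset

def stableGuesses (e m : ℕ) : Finset (List Bool) :=
  (guessesAt e
    (Nat.findGreatest (fun j => (guessesAt e j).toFinset.card ≤ bound e (level e)) m)).toFinset

theorem card_stableGuesses_le (e m : ℕ) : (stableGuesses e m).card ≤ bound e (level e) :=
  Nat.findGreatest_spec (P := fun j => (guessesAt e j).toFinset.card ≤ bound e (level e))
    (Nat.zero_le m) (by simp [guessesAt, guesses])

theorem take_mem_stableGuesses {e k m : ℕ} {σ : List Bool} (hk : k ≤ m) (h : Kills e k σ) :
    σ.take (level e) ∈ stableGuesses e m :=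
  List.mem_toFinset.2 <| guesses_mono (Nat.le_findGreatest hk h.2.2) h.2.1

theorem card_filter_take_mem_stableGuesses_le {e m : ℕ} (he : e < m) (hL : level e ≤ m) :
    (univ.filter fun v : List.Vector Bool m =>
      v.toList.take (level e) ∈ stableGuesses e m).card ≤ 2 ^ (m - (e + 1)) := by
  refine Nat.le_of_mul_le_mul_right ?_ (Nat.two_pow_pos (e + 1))
  calc _ ≤ bound e (level e) * 2 ^ (m - level e) * 2 ^ (e + 1) := by
        gcongr
        exact (List.Vector.card_filter_take_mem_le _ m _).trans
          (by rw [Fintype.card_bool]; gcongr; exact card_stableGuesses_le e m)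
    _ = bound e (level e) * 2 ^ (e + 1) * 2 ^ (m - level e) := by ring
    _ ≤ 2 ^ level e * 2 ^ (m - level e) := by gcongr; exact bound_level_mul_two_pow_le e
    _ = 2 ^ (m - (e + 1)) * 2 ^ (e + 1) := by rw [← pow_add, ← pow_add]; congr 1; omega

open scoped Classical in
theorem card_filter_notMem_tree_lt (m : ℕ) :
    (univ.filter fun v : List.Vector Bool m => v.toList ∉ tree).card < 2 ^ m := by
  have hcover : (univ.filter fun v : List.Vector Bool m => v.toList ∉ tree) ⊆
      ((range m).filter (level · ≤ m)).biUnion fun e =>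
        univ.filter fun v : List.Vector Bool m => v.toList.take (level e) ∈ stableGuesses e m := by
    intro v hv
    simp only [tree, Set.mem_ofPred_eq, not_forall, not_not, mem_filter, mem_univ,
      true_and, List.Vector.toList_length] at hv
    obtain ⟨k, hk, e, he, hkill⟩ := hv
    simp only [mem_biUnion, mem_filter, mem_range, mem_univ, true_and]
    exact ⟨e, ⟨by omega, hkill.1.trans hk⟩, take_mem_stableGuesses hk hkill⟩
  calc _ ≤ _ := card_le_card hcover
    _ ≤ _ := card_biUnion_le
    _ ≤ ∑ e ∈ (range m).filter (level · ≤ m), 2 ^ (m - (e + 1)) := by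
        refine sum_le_sum fun e he => ?_
        simp only [mem_filter, mem_range] at he
        exact card_filter_take_mem_stableGuesses_le he.1 he.2
    _ ≤ ∑ e ∈ range m, 2 ^ (m - (e + 1)) := sum_le_sum_of_subset (filter_subset _ _)
    _ < 2 ^ m := Nat.sum_range_two_pow_sub_succ_lt m

open scoped Classical in
theorem exists_mem_tree_length_eq (m : ℕ) : ∃ σ ∈ tree, σ.length = m := by
  by_contra! h
  have hall : (univ.filter fun v : List.Vector Bool m => v.toList ∉ tree) = univ :=
    filter_true_of_mem fun v _ hv => h _ hv (List.Vector.toList_length v)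
  have := card_filter_notMem_tree_lt m
  rw [hall, card_univ, card_vector, Fintype.card_bool] at this
  exact this.false

end Counting

theorem not_guessable_of_isPath {x : ℕ → Bool} (hx : IsPath tree x) : ¬ Guessable x := by
  rintro ⟨C, g, hg, hg_spec⟩
  obtain ⟨c, hc⟩ := hg.exists_code_eval_pair
  set e := Nat.pair (encode c) C
  have hguesses : ∀ k, guessesAt e k = guesses (List Bool) c (level e) k := by
    simp [guessesAt, e]
  obtain ⟨-, hfin, hcard, s, hs⟩ := hg_spec (level e)
  obtain ⟨k, hmem, hek, hlevel⟩ := ((eventually_mem_guesses (hc (level e)) hs).and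
    ((Filter.eventually_gt_atTop e).and (Filter.eventually_ge_atTop (level e)))).exists
  have hsound : (guessesAt e k).toFinset ⊆ hfin.toFinset := fun τ hτ => by
    rw [hguesses, List.mem_toFinset] at hτ
    exact hfin.mem_toFinset.2 (exists_eq_some_of_mem_guesses (hc (level e)) hτ)
  have hkills : Kills e k (initSeg x k) := by
    refine ⟨hlevel, by rwa [initSeg_take x hlevel, hguesses], ?_⟩
    calc _ ≤ hfin.toFinset.card := Finset.card_le_card hsound
      _ = {σ : List Bool | ∃ s, g (level e) s = some σ}.ncard :=
        (Set.ncard_eq_toFinset_card _ hfin).symm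
      _ ≤ C * (level e + 1) ^ 2 := hcard
      _ = bound e (level e) := by simp [bound, e]
  exact hx k k (by simp [initSeg]) e hek hkills

end NoGuessableTree

/-- There is a computable infinite binary tree none of whose paths is guessable. -/
theorem exists_computable_tree_no_guessable_path :
    ∃ R : Set (List Bool), ComputablePred (· ∈ R) ∧ IsBinaryTree R ∧
      (∀ n : ℕ, ∃ σ ∈ R, σ.length = n) ∧
      ∀ x : ℕ → Bool, IsPath R x → ¬ Guessable x :=
  ⟨NoGuessableTree.tree, NoGuessableTree.primrecPred_mem_tree.computablePred,
    NoGuessableTree.isBinaryTree_tree, NoGuessableTree.exists_mem_tree_length_eq,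
    fun _ => NoGuessableTree.not_guessable_of_isPath⟩
end

section
/- If R is an infinite binary tree, then the L-theory T_R is satisfiable, i.e., T_R has a model. -/
/-!
By Kőnig's lemma the infinite binary tree `R` has an infinite branch `x : ℕ → Bool`, i.e. every
initial segment of `x` lies in `R`. Expand `(ℤ, 0, succ, pred)` by interpreting `A` as
`{k ∈ ℕ | x k}`: its `L₀`-reduct is `ℤ` itself, so it satisfies the `L₀`-part of `T_R`, and the
`n`-th tree axiom holds because the truth values of `A(0), …, A(Sⁿ⁻¹0)` form the initial segment
of `x` of length `n`, which belongs to `R`.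
-/

open FirstOrder FirstOrder.Language

/-- The function symbols of the language `L`: a constant `0` and unary functions `S`, `P`. -/
inductive LFunc : ℕ → Type
  | zero : LFunc 0
  | succ : LFunc 1
  | pred : LFunc 1

/-- The relation symbols of the language `L`: a unary relation `A`. -/
inductive LRel : ℕ → Type
  | A : LRel 1

/-- The first-order language with a constant symbol `0`, unary function symbols `S` and `P`,
and a unary relation symbol `A`. -/
def L : Language := ⟨LFunc, LRel⟩

/-- The reduct `L₀` of `L` without the relation symbol `A`. -/
def L₀ : Language := ⟨LFunc, fun _ => Empty⟩

/-- The inclusion of `L₀` into `L`. -/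
def incl : L₀ →ᴸ L where
  onFunction := fun {_} f => f
  onRelation := fun {_} r => Empty.elim r

/-- `ℤ` as an `L₀`-structure, interpreting `0` as zero, `S` as successor, `P` as predecessor. -/
instance intL0Structure : L₀.Structure ℤ where
  funMap := fun f v => match f with
    | .zero => 0
    | .succ => v 0 + 1
    | .pred => v 0 - 1
  RelMap := fun r _ => Empty.elim r

/-- The `L`-term `0`. -/
def zeroT {α : Type*} : L.Term α := Term.func LFunc.zero ![]

/-- The `L`-term `S t`. -/
def succT {α : Type*} (t : L.Term α) : L.Term α := Term.func LFunc.succ ![t]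

/-- The `L`-term `P t`. -/
def predT {α : Type*} (t : L.Term α) : L.Term α := Term.func LFunc.pred ![t]

/-- The `L`-term `Sᵏ t`. -/
def iterST {α : Type*} (k : ℕ) (t : L.Term α) : L.Term α := succT^[k] t

/-- The `L`-term `Pᵏ t`. -/
def iterPT {α : Type*} (k : ℕ) (t : L.Term α) : L.Term α := predT^[k] t

/-- The atomic `L`-formula `A t`. -/
def Aform {α : Type*} (t : L.Term α) : L.Formula α := Relations.formula LRel.A ![t]

/-- The disjunction of a finite set of formulas (the pre-2025 Mathlib `BoundedFormula.iSup`). -/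
noncomputable def finsetISup {α β : Type*} {n : ℕ} (s : Finset β) (f : β → L.BoundedFormula α n) :
    L.BoundedFormula α n :=
  (s.toList.map f).foldr (· ⊔ ·) ⊥

/-- The conjunction of a finite set of formulas (the pre-2025 Mathlib `BoundedFormula.iInf`). -/
noncomputable def finsetIInf {α β : Type*} {n : ℕ} (s : Finset β) (f : β → L.BoundedFormula α n) :
    L.BoundedFormula α n :=
  (s.toList.map f).foldr (· ⊓ ·) ⊤

/-- The sentence asserting that the truth values of `A(0), A(S0), …, A(Sⁿ⁻¹0)` follow the
pattern `σ`. -/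
noncomputable def patternSentence (n : ℕ) (σ : Fin n → Bool) : L.Sentence :=
  finsetIInf Finset.univ fun i : Fin n =>
    if σ i then Aform (iterST i zeroT) else (Aform (iterST i zeroT)).not

/-- The `n`-th tree axiom for `R`: the disjunction, over all length-`n` strings `σ ∈ R`, of
the sentence asserting that `A(0), …, A(Sⁿ⁻¹0)` follow the pattern `σ`. -/
noncomputable def treeAxiom (R : Set (List Bool)) (n : ℕ) : L.Sentence :=
  letI := Classical.decPred fun σ : Fin n → Bool => List.ofFn σ ∈ R
  finsetISup (Finset.univ.filter fun σ : Fin n → Bool => List.ofFn σ ∈ R)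
    (patternSentence n)

/-- The theory `T_R`: all `L₀`-sentences true in `(ℤ, 0, succ, pred)`, together with the
tree axioms for `R`. -/
noncomputable def TR (R : Set (List Bool)) : L.Theory :=
  incl.onTheory (L₀.completeTheory ℤ) ∪ Set.range (treeAxiom R)

theorem exists_infinite_branch {β : Type*} [Finite β] {R : Set (List β)}
    (hTree : ∀ σ ∈ R, ∀ τ : List β, τ <+: σ → τ ∈ R) (hInf : ∀ n : ℕ, ∃ σ ∈ R, σ.length = n) :
    ∃ x : ℕ → β, ∀ n : ℕ, List.ofFn (fun i : Fin n => x i) ∈ R := by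
  -- Kőnig's lemma for the inverse system of the levels of `R`, with restriction as projection.
  let α (n : ℕ) := {σ : Fin n → β // List.ofFn σ ∈ R}
  have (n : ℕ) : Nonempty (α n) := by
    obtain ⟨σ, hσ, rfl⟩ := hInf n
    exact ⟨⟨σ.get, by rwa [List.ofFn_get]⟩⟩
  let π {m n : ℕ} (h : m ≤ n) (σ : α n) : α m :=
    ⟨Fin.take m h σ.1, hTree _ σ.2 _ <| by
      rw [Fin.ofFn_take_eq_take_ofFn]; exact List.take_prefix _ _⟩
  obtain ⟨f, hf⟩ := exists_seq_forall_proj_of_forall_finite (α := α) π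
    (fun _ σ => Subtype.ext (Fin.take_eq_self σ.1))
    (fun _ _ _ _ _ σ => Subtype.ext (Fin.take_take _ _ σ.1)) (fun _ _ => Set.toFinite _)
  refine ⟨fun n => (f (n + 1)).1 (Fin.last n), fun n => ?_⟩
  convert (f n).2 using 2
  funext i
  change (f (i + 1)).1 (Fin.last i) = _
  rw [← hf (Nat.succ_le_of_lt i.2)]
  rfl

theorem realize_finsetISup {α β M : Type*} [L.Structure M] {n : ℕ} (s : Finset β)
    (f : β → L.BoundedFormula α n) (v : α → M) (xs : Fin n → M) :
    (finsetISup s f).Realize v xs ↔ ∃ b ∈ s, (f b).Realize v xs := by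
  simp [finsetISup]

theorem realize_finsetIInf {α β M : Type*} [L.Structure M] {n : ℕ} (s : Finset β)
    (f : β → L.BoundedFormula α n) (v : α → M) (xs : Fin n → M) :
    (finsetIInf s f).Realize v xs ↔ ∀ b ∈ s, (f b).Realize v xs := by
  simp [finsetIInf]

def BranchModel (_ : ℕ → Bool) : Type := ℤ

namespace BranchModel

variable (x : ℕ → Bool)

instance : L₀.Structure (BranchModel x) := intL0Structure

instance : L.Structure (BranchModel x) where
  funMap := Structure.funMap (L := L₀) (M := ℤ)
  RelMap
    | .A, v => ∃ k : ℕ, v 0 = (k : ℤ) ∧ x k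

instance : incl.IsExpansionOn (BranchModel x) where
  map_onFunction _ _ := rfl
  map_onRelation r _ := r.elim

instance : Nonempty (BranchModel x) := ⟨(0 : ℤ)⟩

theorem realize_iterST_zeroT (k : ℕ) (v : Empty → BranchModel x) :
    (iterST k zeroT).realize v = (k : ℤ) := by
  induction k with
  | zero => rfl
  | succ k ih =>
    rw [iterST, Function.iterate_succ_apply', ← iterST]
    change Int.add ((iterST k zeroT).realize (M := BranchModel x) v) 1 = _
    rw [ih]
    rfl

theorem realize_Aform_iterST_zeroT (k : ℕ) (v : Empty → BranchModel x)
    (xs : Fin 0 → BranchModel x) :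
    BoundedFormula.Realize (Aform (iterST k zeroT)) v xs ↔ x k := by
  change (∃ j : ℕ, ((iterST k zeroT).relabel Sum.inl).realize (Sum.elim v xs) = (j : ℤ) ∧ x j) ↔ _
  rw [Term.realize_relabel, realize_iterST_zeroT]
  exact ⟨fun ⟨j, hkj, hj⟩ => Int.ofNat_inj.1 hkj ▸ hj, fun hk => ⟨k, rfl, hk⟩⟩

theorem realize_patternSentence {n : ℕ} (σ : Fin n → Bool) :
    BranchModel x ⊨ patternSentence n σ ↔ σ = fun i : Fin n => x i := by
  rw [Sentence.Realize, Formula.Realize, patternSentence, realize_finsetIInf, funext_iff]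
  refine forall_congr' fun i => ?_
  cases σ i <;> simp [realize_Aform_iterST_zeroT]

theorem realize_treeAxiom {R : Set (List Bool)} {n : ℕ} (h : initSeg x n ∈ R) :
    BranchModel x ⊨ treeAxiom R n := by
  classical
  rw [treeAxiom, Sentence.Realize, Formula.Realize, realize_finsetISup]
  exact ⟨_, Finset.mem_filter.2 ⟨Finset.mem_univ _, h⟩, (realize_patternSentence x _).2 rfl⟩

theorem model_TR {R : Set (List Bool)} (h : ∀ n, initSeg x n ∈ R) : BranchModel x ⊨ TR R := by
  refine Theory.Model.union ((incl.onTheory_model _).2 ?_) ?_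
  · exact (inferInstance : ℤ ⊨ L₀.completeTheory ℤ)
  · rw [Theory.model_iff]
    rintro _ ⟨n, rfl⟩
    exact realize_treeAxiom x (h n)

end BranchModel

/-- If `R` is an infinite binary tree, then the theory `T_R` is satisfiable. -/
theorem TR_isSatisfiable (R : Set (List Bool)) (hTree : IsBinaryTree R)
    (hInf : ∀ n : ℕ, ∃ σ ∈ R, σ.length = n) : (TR R).IsSatisfiable := by
  obtain ⟨x, hx⟩ := exists_infinite_branch hTree hInf
  have : BranchModel x ⊨ TR R := BranchModel.model_TR x hx
  exact Theory.Model.isSatisfiable (BranchModel x)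
end
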